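/- arXiv:2502.14544 — 3 statements merged into one kernel-verified Lean document; each statement's English description precedes it below -/
import Mathlib

section
/- The solution P̂ with dP̂/dQ(θ) = (f')⁻¹(−(N(λ) + L(θ))/λ) satisfies R_z(P̂) + λ·D_f(P̂‖Q) = −λ·∫ f*(−(L(θ) + N(λ))/λ) dQ(θ) − N(λ), where N(λ) is the normalization constant. -/
open MeasureTheory Set

/-- The ERM-fDR solution `P̂` with `dP̂/dQ(θ) = (f')⁻¹(−(N(λ) + L θ)/λ)` satisfies
`R_z(P̂) + λ D_f(P̂‖Q) = −λ ∫ f*(−(L θ + N(λ))/λ) dQ − N(λ)`. -/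
theorem primal_value_eq_dual_value
    {M : Type*} [MeasurableSpace M] (Q : Measure M) [IsProbabilityMeasure Q]
    (L : M → ℝ) (hLm : Measurable L) (hL0 : ∀ θ, 0 ≤ L θ)
    (lam : ℝ) (hlam : 0 < lam)
    (f fstar finv : ℝ → ℝ)
    (hconv : StrictConvexOn ℝ (Ici 0) f)
    (hdiff : DifferentiableOn ℝ f (Ioi 0))
    (hfstar : ∀ t : ℝ, fstar t = t * finv t - f (finv t))
    (hinv : ∀ t : ℝ, deriv f (finv t) = t)
    (N : ℝ)
    (hpos : ∀ᵐ θ ∂Q, 0 < finv (-(N + L θ) / lam))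
    (hnorm : ∫ θ, finv (-(N + L θ) / lam) ∂Q = 1)
    (hint1 : Integrable (fun θ => L θ * finv (-(N + L θ) / lam)) Q)
    (hint2 : Integrable (fun θ => f (finv (-(N + L θ) / lam))) Q) :
    (∫ θ, L θ * finv (-(N + L θ) / lam) ∂Q)
      + lam * ∫ θ, f (finv (-(N + L θ) / lam)) ∂Q
    = -lam * (∫ θ, fstar (-(L θ + N) / lam) ∂Q) - N := by
  have hgint : Integrable (fun θ => finv (-(N + L θ) / lam)) Q := by
    by_contra h
    rw [integral_undef h] at hnorm
    norm_num at hnorm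
  have hkey : ∀ θ, fstar (-(L θ + N) / lam)
      = ((-(1 / lam)) * (L θ * finv (-(N + L θ) / lam))
          + (-(N / lam)) * finv (-(N + L θ) / lam))
        - f (finv (-(N + L θ) / lam)) := by
    intro θ
    have h1 : (-(L θ + N) / lam) = (-(N + L θ) / lam) := by ring
    rw [hfstar, h1]
    ring
  have hrw : (∫ θ, fstar (-(L θ + N) / lam) ∂Q)
      = (-(1 / lam)) * (∫ θ, L θ * finv (-(N + L θ) / lam) ∂Q)
        + (-(N / lam)) * (∫ θ, finv (-(N + L θ) / lam) ∂Q)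
        - ∫ θ, f (finv (-(N + L θ) / lam)) ∂Q := by
    calc (∫ θ, fstar (-(L θ + N) / lam) ∂Q)
        = ∫ θ, (((-(1 / lam)) * (L θ * finv (-(N + L θ) / lam))
            + (-(N / lam)) * finv (-(N + L θ) / lam))
          - f (finv (-(N + L θ) / lam))) ∂Q :=
          integral_congr_ae (Filter.Eventually.of_forall fun θ => hkey θ)
      _ = (∫ θ, ((-(1 / lam)) * (L θ * finv (-(N + L θ) / lam))
            + (-(N / lam)) * finv (-(N + L θ) / lam)) ∂Q)
          - ∫ θ, f (finv (-(N + L θ) / lam)) ∂Q :=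
          integral_sub ((hint1.const_mul _).add (hgint.const_mul _)) hint2
      _ = (∫ θ, (-(1 / lam)) * (L θ * finv (-(N + L θ) / lam)) ∂Q)
          + (∫ θ, (-(N / lam)) * finv (-(N + L θ) / lam) ∂Q)
          - ∫ θ, f (finv (-(N + L θ) / lam)) ∂Q := by
          rw [integral_add (hint1.const_mul _) (hgint.const_mul _)]
      _ = _ := by rw [integral_const_mul, integral_const_mul]
  rw [hrw, hnorm]
  have hl : lam ≠ 0 := hlam.ne'
  field_simp
  ring
end

section
/- If λ ∈ A (the set of regularization factors for which the ERM-f-divergence-regularized problem has a solution), then every λ' > λ also belongs to A; that is, A is an interval unbounded above, of the form [λ*, ∞) or (λ*, ∞) with λ* = inf A. -/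
/-!
With `h θ = -(β + L θ) / λ` and `s = λ / λ' ∈ (0, 1]`, the argument of `finv` at `λ'` is
`s * h θ + c` for an affine reparametrization `c` of `β'`; so we look for `c` keeping
`finv (s * h + c)` positive with integral `∫ finv ∘ h = 1`. Since `L ≥ 0`, `h` is bounded above
by some `H`, so `c ↦ ∫ finv (s * h + c)` is continuous by dominated convergence wherever the
integrand is nonnegative, and at `c = (1 - s) * H` the argument dominates `h`. For a value of `c`
where the integral is at most `1`: if `finv > 0` everywhere, push the argument below a point where
`finv ≤ 1`, which exists by the first moment method; otherwise positivity of `finv` starts at a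
threshold `x₀`, and `c = (1 - s) * x₀` pulls `h` towards `x₀` without leaving the positivity
region. The intermediate value theorem concludes.
-/

open MeasureTheory Set

theorem IsUpperSet.csInf_add_mul_sub_mem {P : Set ℝ} (hP : IsUpperSet P) (hb : BddBelow P)
    {y s : ℝ} (hy : y ∈ P) (hs : 0 < s) : sInf P + s * (y - sInf P) ∈ P := by
  rcases (csInf_le hb hy).eq_or_lt with hy₀ | hy₀
  · simpa [← hy₀] using hy
  · obtain ⟨p, hp, hlt⟩ := exists_lt_of_csInf_lt ⟨y, hy⟩
      (lt_add_of_pos_right (sInf P) (mul_pos hs (sub_pos.mpr hy₀)))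
    exact hP hlt.le hp

theorem IsUpperSet.eq_Ici_csInf_or_eq_Ioi_csInf {α : Type*} [ConditionallyCompleteLinearOrder α]
    {P : Set α} (hP : IsUpperSet P) (hb : BddBelow P) (hne : P.Nonempty) :
    P = Ici (sInf P) ∨ P = Ioi (sInf P) := by
  have hIoi : Ioi (sInf P) ⊆ P := fun x hx => by
    obtain ⟨p, hp, hpx⟩ := exists_lt_of_csInf_lt hne hx
    exact hP hpx.le hp
  simpa using mem_Ici_Ioi_of_subset_of_subset hIoi fun x hx => csInf_le hb hx

section

variable {M : Type*} [MeasurableSpace M] {Q : Measure M} {φ : ℝ → ℝ}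

theorem integrable_comp_of_ae_nonneg_of_ae_le [IsFiniteMeasure Q] (hφ : Monotone φ)
    (hφc : Continuous φ) {v : M → ℝ} (hv : AEMeasurable v Q) {V : ℝ}
    (hV : ∀ᵐ θ ∂Q, v θ ≤ V) (h0 : ∀ᵐ θ ∂Q, 0 ≤ φ (v θ)) :
    Integrable (fun θ => φ (v θ)) Q := by
  refine (integrable_const (φ V)).mono' (hφc.comp_aestronglyMeasurable hv.aestronglyMeasurable) ?_
  filter_upwards [hV, h0] with θ hθV hθ0
  rw [Real.norm_eq_abs, abs_of_nonneg hθ0]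
  exact hφ hθV

theorem continuousOn_integral_comp_add [IsFiniteMeasure Q] (hφ : Monotone φ)
    (hφc : Continuous φ) {u : M → ℝ} (hu : AEMeasurable u Q) {U : ℝ}
    (hU : ∀ᵐ θ ∂Q, u θ ≤ U) {lo hi : ℝ} (hlo : ∀ᵐ θ ∂Q, 0 ≤ φ (u θ + lo)) :
    ContinuousOn (fun c => ∫ θ, φ (u θ + c) ∂Q) (Icc lo hi) := by
  refine continuousOn_of_dominated (bound := fun _ => φ (U + hi))
    (fun c _ => hφc.comp_aestronglyMeasurable (hu.add_const c).aestronglyMeasurable)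
    (fun c hc => ?_) (integrable_const _)
    (ae_of_all _ fun θ => (hφc.comp (continuous_const_add (u θ))).continuousOn)
  filter_upwards [hU, hlo] with θ hθU hθ0
  rw [Real.norm_eq_abs, abs_of_nonneg (hθ0.trans (hφ (by linarith [hc.1])))]
  exact hφ (by linarith [hc.2])

theorem exists_integral_comp_add_eq [IsFiniteMeasure Q] (hφ : Monotone φ)
    (hφc : Continuous φ) {u : M → ℝ} (hu : AEMeasurable u Q) {U : ℝ}
    (hU : ∀ᵐ θ ∂Q, u θ ≤ U) {lo hi y : ℝ} (hlo : ∀ᵐ θ ∂Q, 0 ≤ φ (u θ + lo)) (hle : lo ≤ hi)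
    (hy : y ∈ Icc (∫ θ, φ (u θ + lo) ∂Q) (∫ θ, φ (u θ + hi) ∂Q)) :
    ∃ c ∈ Icc lo hi, ∫ θ, φ (u θ + c) ∂Q = y :=
  intermediate_value_Icc hle (continuousOn_integral_comp_add hφ hφc hu hU hlo) hy

variable [IsProbabilityMeasure Q] {h : M → ℝ} {H s : ℝ}

theorem exists_pos_integral_comp_mul_add_le_of_forall_pos (hφ : Monotone φ) (hφc : Continuous φ)
    (hall : ∀ x, 0 < φ x) (hh : AEMeasurable h Q) (hH : ∀ᵐ θ ∂Q, h θ ≤ H) (hs : 0 ≤ s) :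
    ∃ lo ≤ (1 - s) * H, (∀ᵐ θ ∂Q, 0 < φ (s * h θ + lo)) ∧
      ∫ θ, φ (s * h θ + lo) ∂Q ≤ ∫ θ, φ (h θ) ∂Q := by
  have hφh := integrable_comp_of_ae_nonneg_of_ae_le hφ hφc hh hH (ae_of_all _ fun _ => (hall _).le)
  obtain ⟨θ₀, hθ₀⟩ := exists_le_integral hφh
  set lo := min (h θ₀ - s * H) ((1 - s) * H)
  have hbelow : ∀ᵐ θ ∂Q, s * h θ + lo ≤ h θ₀ := by
    filter_upwards [hH] with θ hθ
    nlinarith [min_le_left (h θ₀ - s * H) ((1 - s) * H), mul_le_mul_of_nonneg_left hθ hs]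
  refine ⟨lo, min_le_right _ _, ae_of_all _ fun _ => hall _, ?_⟩
  calc ∫ θ, φ (s * h θ + lo) ∂Q ≤ ∫ _, φ (h θ₀) ∂Q :=
        integral_mono_ae (integrable_comp_of_ae_nonneg_of_ae_le hφ hφc
          ((hh.const_mul s).add_const lo) hbelow (ae_of_all _ fun _ => (hall _).le))
          (integrable_const _) (hbelow.mono fun _ hθ => hφ hθ)
    _ = φ (h θ₀) := by simp
    _ ≤ ∫ θ, φ (h θ) ∂Q := hθ₀

theorem exists_pos_integral_comp_mul_add_le_of_nonpos (hφ : Monotone φ) (hφc : Continuous φ)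
    {x₁ : ℝ} (hx₁ : φ x₁ ≤ 0) (hh : AEMeasurable h Q) (hH : ∀ᵐ θ ∂Q, h θ ≤ H)
    (hpos : ∀ᵐ θ ∂Q, 0 < φ (h θ)) (hs0 : 0 < s) (hs1 : s ≤ 1) :
    ∃ lo ≤ (1 - s) * H, (∀ᵐ θ ∂Q, 0 < φ (s * h θ + lo)) ∧
      ∫ θ, φ (s * h θ + lo) ∂Q ≤ ∫ θ, φ (h θ) ∂Q := by
  set P := {x | 0 < φ x}
  have hPup : IsUpperSet P := fun a b hab ha => lt_of_lt_of_le ha (hφ hab)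
  have hPbdd : BddBelow P := ⟨x₁, fun x hx => (hφ.reflect_lt (hx₁.trans_lt hx)).le⟩
  obtain ⟨θ₀, hθ₀H, hθ₀P⟩ := (hH.and hpos).exists
  set lo := (1 - s) * sInf P
  have hlo_pos : ∀ᵐ θ ∂Q, 0 < φ (s * h θ + lo) := by
    filter_upwards [hpos] with θ hθ
    rw [show s * h θ + lo = sInf P + s * (h θ - sInf P) by ring]
    exact hPup.csInf_add_mul_sub_mem hPbdd hθ hs0
  have hlo_le : ∀ᵐ θ ∂Q, φ (s * h θ + lo) ≤ φ (h θ) := by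
    filter_upwards [hpos] with θ hθ
    exact hφ (by nlinarith [csInf_le hPbdd hθ])
  refine ⟨lo, mul_le_mul_of_nonneg_left ((csInf_le hPbdd hθ₀P).trans hθ₀H) (by linarith),
    hlo_pos, integral_mono_ae ?_
      (integrable_comp_of_ae_nonneg_of_ae_le hφ hφc hh hH (hpos.mono fun _ => le_of_lt)) hlo_le⟩
  refine integrable_comp_of_ae_nonneg_of_ae_le hφ hφc ((hh.const_mul s).add_const lo)
    (V := s * H + lo) ?_ (hlo_pos.mono fun _ => le_of_lt)
  filter_upwards [hH] with θ hθ
  nlinarith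

theorem exists_pos_integral_comp_mul_add_eq (hφ : Monotone φ) (hφc : Continuous φ)
    (hh : AEMeasurable h Q) (hH : ∀ᵐ θ ∂Q, h θ ≤ H) (hpos : ∀ᵐ θ ∂Q, 0 < φ (h θ))
    (hs0 : 0 < s) (hs1 : s ≤ 1) :
    ∃ c, (∀ᵐ θ ∂Q, 0 < φ (s * h θ + c)) ∧ ∫ θ, φ (s * h θ + c) ∂Q = ∫ θ, φ (h θ) ∂Q := by
  obtain ⟨lo, hlo_le, hlo_pos, hlo_int⟩ : ∃ lo ≤ (1 - s) * H,
      (∀ᵐ θ ∂Q, 0 < φ (s * h θ + lo)) ∧ ∫ θ, φ (s * h θ + lo) ∂Q ≤ ∫ θ, φ (h θ) ∂Q := by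
    by_cases hall : ∀ x, 0 < φ x
    · exact exists_pos_integral_comp_mul_add_le_of_forall_pos hφ hφc hall hh hH hs0.le
    · obtain ⟨x₁, hx₁⟩ := not_forall.mp hall
      exact exists_pos_integral_comp_mul_add_le_of_nonpos hφ hφc (not_lt.mp hx₁) hh hH hpos hs0 hs1
  have hhi_ge : ∀ᵐ θ ∂Q, φ (h θ) ≤ φ (s * h θ + (1 - s) * H) := by
    filter_upwards [hH] with θ hθ
    exact hφ (by nlinarith)
  have hhi_int : ∫ θ, φ (h θ) ∂Q ≤ ∫ θ, φ (s * h θ + (1 - s) * H) ∂Q :=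
    integral_mono_ae
      (integrable_comp_of_ae_nonneg_of_ae_le hφ hφc hh hH (hpos.mono fun _ => le_of_lt))
      (integrable_comp_of_ae_nonneg_of_ae_le hφ hφc ((hh.const_mul s).add_const _) (V := H)
        (hH.mono fun _ hθ => by nlinarith) ((hpos.and hhi_ge).mono fun _ hθ => hθ.1.le.trans hθ.2))
      hhi_ge
  have hU : ∀ᵐ θ ∂Q, s * h θ ≤ s * H := hH.mono fun _ hθ => by gcongr
  obtain ⟨c, hc, hc_int⟩ := exists_integral_comp_add_eq hφ hφc (hh.const_mul s) hU
    (hlo_pos.mono fun _ => le_of_lt) hlo_le ⟨hlo_int, hhi_int⟩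
  exact ⟨c, hlo_pos.mono fun θ hθ => hθ.trans_le (hφ (by linarith [hc.1])), hc_int⟩

end

theorem admissible_regularization_upward_closed_general
    {M : Type*} [MeasurableSpace M] (Q : Measure M) [IsProbabilityMeasure Q]
    (L : M → ℝ) (hLm : Measurable L) (hL0 : ∀ θ, 0 ≤ L θ)
    (finv : ℝ → ℝ)
    (hmono : StrictMono finv) (hcont : Continuous finv)
    (A : Set ℝ)
    (hAdef : A = {lam : ℝ | 0 < lam ∧ ∃ β : ℝ,
      (∀ᵐ θ ∂Q, 0 < finv (-(β + L θ) / lam)) ∧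
      ∫ θ, finv (-(β + L θ) / lam) ∂Q = 1}) :
    (∀ lam ∈ A, ∀ lam' : ℝ, lam < lam' → lam' ∈ A) ∧
    (A.Nonempty → A = Ici (sInf A) ∨ A = Ioi (sInf A)) := by
  have hup : ∀ lam ∈ A, ∀ lam' : ℝ, lam < lam' → lam' ∈ A := by
    rw [hAdef]
    rintro lam ⟨hlam, β, hpos, hint⟩ lam' hlt
    have hlam' : 0 < lam' := hlam.trans hlt
    obtain ⟨c, hc_pos, hc_int⟩ := exists_pos_integral_comp_mul_add_eq (s := lam / lam')
      hmono.monotone hcont (by fun_prop) (H := -β / lam)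
      (ae_of_all _ fun θ => by gcongr; linarith [hL0 θ]) hpos (by positivity)
      ((div_le_one hlam').mpr hlt.le)
    have hrescale : ∀ θ, -(β - lam' * c + L θ) / lam' = lam / lam' * (-(β + L θ) / lam) + c := by
      intro θ
      field_simp
      ring
    refine ⟨hlam', β - lam' * c, ?_, ?_⟩
    · simpa only [hrescale] using hc_pos
    · simpa only [hrescale, hint] using hc_int
  have hbdd : BddBelow A := ⟨0, by rw [hAdef]; exact fun _ h => h.1.le⟩
  refine ⟨hup, fun hne => IsUpperSet.eq_Ici_csInf_or_eq_Ioi_csInf ?_ hbdd hne⟩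
  intro lam lam' hle hlam
  rcases hle.eq_or_lt with rfl | hlt
  exacts [hlam, hup lam hlam lam' hlt]

/-- The set `A` of regularization factors for which the ERM-fDR problem has a solution
is upward closed: if `λ ∈ A` and `λ' > λ`, then `λ' ∈ A`. Hence, if nonempty, `A` is an
interval unbounded above, of the form `[λ*, ∞)` or `(λ*, ∞)` with `λ* = inf A`. -/
theorem admissible_regularization_upward_closed
    {M : Type*} [MeasurableSpace M] (Q : Measure M) [IsProbabilityMeasure Q]
    (L : M → ℝ) (hLm : Measurable L) (hL0 : ∀ θ, 0 ≤ L θ)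
    (f finv : ℝ → ℝ)
    (hconv : StrictConvexOn ℝ (Ici 0) f)
    (hdiff : DifferentiableOn ℝ f (Ioi 0))
    (hmono : StrictMono finv) (hcont : Continuous finv)
    (hinv : ∀ x : ℝ, 0 < x → finv (deriv f x) = x)
    (A : Set ℝ)
    (hAdef : A = {lam : ℝ | 0 < lam ∧ ∃ β : ℝ,
      (∀ᵐ θ ∂Q, 0 < finv (-(β + L θ) / lam)) ∧
      ∫ θ, finv (-(β + L θ) / lam) ∂Q = 1}) :
    (∀ lam ∈ A, ∀ lam' : ℝ, lam < lam' → lam' ∈ A) ∧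
    (A.Nonempty → A = Ici (sInf A) ∨ A = Ioi (sInf A)) :=
  admissible_regularization_upward_closed_general Q L hLm hL0 finv hmono hcont A hAdef
end

section
/- For any probability measure P ≪ Q, the gap G(z, P, P̂) := R_z(P) − R_z(P̂) between P and the ERM-f-divergence-regularized solution P̂ satisfies G(z, P, P̂) = λ·∫ (1 − dP/dP̂(θ))·[f(dP̂/dQ(θ)) + f*(−(L(θ) + N(λ))/λ)] dQ(θ). -/
open MeasureTheory Set

/-- For any probability measure `P ≪ Q` with density `p` w.r.t. `Q`, the gap
`G(z,P,P̂) = R_z(P) − R_z(P̂)` between `P` and the ERM-fDR solution `P̂`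
(with density `g(θ) = (f')⁻¹(−(N(λ)+L θ)/λ)` w.r.t. `Q`) satisfies
`G(z,P,P̂) = λ ∫ (1 − p/g) (f(g) + f*(−(L + N(λ))/λ)) dQ`. -/
theorem gap_formula
    {M : Type*} [MeasurableSpace M] (Q : Measure M) [IsProbabilityMeasure Q]
    (L : M → ℝ) (hLm : Measurable L) (hL0 : ∀ θ, 0 ≤ L θ)
    (lam N : ℝ) (hlam : 0 < lam)
    (f fstar finv : ℝ → ℝ)
    (hconv : StrictConvexOn ℝ (Ici 0) f)
    (hdiff : DifferentiableOn ℝ f (Ioi 0))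
    (hfstar : ∀ t : ℝ, fstar t = t * finv t - f (finv t))
    (hinv : ∀ t : ℝ, deriv f (finv t) = t)
    (hpos : ∀ θ, 0 < finv (-(N + L θ) / lam))
    (hnorm : ∫ θ, finv (-(N + L θ) / lam) ∂Q = 1)
    (p : M → ℝ) (hpm : Measurable p) (hp0 : ∀ θ, 0 ≤ p θ)
    (hpnorm : ∫ θ, p θ ∂Q = 1)
    (hint1 : Integrable (fun θ => L θ * p θ) Q)
    (hint2 : Integrable (fun θ => L θ * finv (-(N + L θ) / lam)) Q) :
    (∫ θ, L θ * p θ ∂Q) - (∫ θ, L θ * finv (-(N + L θ) / lam) ∂Q)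
      = lam * ∫ θ, (1 - p θ / finv (-(N + L θ) / lam)) *
          (f (finv (-(N + L θ) / lam)) + fstar (-(L θ + N) / lam)) ∂Q := by
  set g : M → ℝ := fun θ => finv (-(N + L θ) / lam) with hg
  have hlam' : lam ≠ 0 := ne_of_gt hlam
  have hgi : Integrable g Q := by
    by_contra h
    rw [integral_undef h] at hnorm
    norm_num at hnorm
  have hpi : Integrable p Q := by
    by_contra h
    rw [integral_undef h] at hpnorm
    norm_num at hpnorm
  have key : ∀ θ, (1 - p θ / g θ) * (f (g θ) + fstar (-(L θ + N) / lam))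
      = (1 / lam) * ((L θ + N) * (p θ - g θ)) := by
    intro θ
    have h1 : -(L θ + N) / lam = -(N + L θ) / lam := by ring
    have h2 : g θ ≠ 0 := ne_of_gt (hpos θ)
    have h3 : finv (-(L θ + N) / lam) = g θ := by rw [h1]
    rw [hfstar, h3]
    field_simp
    ring
  have hrw : (∫ θ, (1 - p θ / g θ) * (f (g θ) + fstar (-(L θ + N) / lam)) ∂Q)
      = (1 / lam) * ∫ θ, (L θ + N) * (p θ - g θ) ∂Q := by
    rw [← integral_const_mul]
    exact integral_congr_ae (Filter.Eventually.of_forall key)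
  rw [hrw, ← mul_assoc, mul_one_div, div_self hlam', one_mul]
  have expand : ∀ θ, (L θ + N) * (p θ - g θ)
      = (L θ * p θ - L θ * g θ) + (N * p θ - N * g θ) := by intro θ; ring
  rw [integral_congr_ae (Filter.Eventually.of_forall expand)]
  have e1 : ∫ θ, (L θ * p θ - L θ * g θ) + (N * p θ - N * g θ) ∂Q
      = (∫ θ, L θ * p θ - L θ * g θ ∂Q) + ∫ θ, N * p θ - N * g θ ∂Q :=
    integral_add (hint1.sub hint2) ((hpi.const_mul N).sub (hgi.const_mul N))
  have e2 : ∫ θ, L θ * p θ - L θ * g θ ∂Q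
      = (∫ θ, L θ * p θ ∂Q) - ∫ θ, L θ * g θ ∂Q := integral_sub hint1 hint2
  have e3 : ∫ θ, N * p θ - N * g θ ∂Q
      = (∫ θ, N * p θ ∂Q) - ∫ θ, N * g θ ∂Q :=
    integral_sub (hpi.const_mul N) (hgi.const_mul N)
  rw [e1, e2, e3, integral_const_mul, integral_const_mul, hpnorm, hnorm]
  ring
end
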